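/- The sum of two u-L-weakly compact operators is u-L-weakly compact: if T, S : X → E are u-L-weakly compact, then every disjoint sequence in sol((T+S)(U)) is un-convergent to 0. -/

import Mathlib

open Filter

/-- A sequence in a normed lattice is unbounded norm (un-) convergent to `0`. -/
def UnNullSeq {F : Type*} [NormedAddCommGroup F] [Lattice F] [IsOrderedAddMonoid F] [HasSolidNorm F] (y : ℕ → F) : Prop :=
  ∀ w : F, 0 ≤ w → Tendsto (fun n => ‖|y n| ⊓ w‖) atTop (nhds 0)

/-- The solid hull of the image of the closed unit ball under `T`. -/
def SolTU {X E : Type*} [NormedAddCommGroup X] [NormedSpace ℝ X]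
    [NormedAddCommGroup E] [Lattice E] [IsOrderedAddMonoid E] [HasSolidNorm E] [NormedSpace ℝ E] (T : X →L[ℝ] E) : Set E :=
  {y : E | ∃ u : X, ‖u‖ ≤ 1 ∧ |y| ≤ |T u|}

/-- `T` is unbounded L-weakly compact. -/
def ULWeaklyCompact {X E : Type*} [NormedAddCommGroup X] [NormedSpace ℝ X]
    [NormedAddCommGroup E] [Lattice E] [IsOrderedAddMonoid E] [HasSolidNorm E] [NormedSpace ℝ E] (T : X →L[ℝ] E) : Prop :=
  ∀ y : ℕ → E, (∀ n, y n ∈ SolTU T) → (∀ n m, n ≠ m → |y n| ⊓ |y m| = 0) →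
    UnNullSeq y

/-! Split `|y| ≤ |Tu| + |Su|` by the Riesz decomposition property into a part dominated by
`|Tu|` and a part dominated by `|Su|`. Both parts are dominated by `|y|`, so a disjoint sequence in
`sol((T+S)(U))` splits into a disjoint sequence in `sol(T(U))` and one in `sol(S(U))`; and
`(a + b) ⊓ w ≤ a ⊓ w + b ⊓ w` for positive `a, b, w` shows that un-null sequences are closed
under such sums. -/

section LatticeOrderedGroup

variable {E : Type*} [Lattice E] [AddCommGroup E] [IsOrderedAddMonoid E]

theorem exists_add_eq_of_le_add {x u v : E} (hx : 0 ≤ x) (hu : 0 ≤ u) (hv : 0 ≤ v)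
    (hxuv : x ≤ u + v) : ∃ a b, 0 ≤ a ∧ a ≤ u ∧ 0 ≤ b ∧ b ≤ v ∧ x = a + b := by
  refine ⟨x ⊓ u, (x - u)⁺, le_inf hx hu, inf_le_right, posPart_nonneg _, ?_, ?_⟩
  · exact sup_le (sub_le_iff_le_add.2 (hxuv.trans_eq (add_comm u v))) hv
  · rw [inf_eq_sub_posPart_sub, sub_add_cancel]

theorem add_inf_le_inf_add_inf {a b w : E} (ha : 0 ≤ a) (hb : 0 ≤ b) (hw : 0 ≤ w) :
    (a + b) ⊓ w ≤ a ⊓ w + b ⊓ w := by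
  rw [add_inf, inf_add, inf_add]
  refine le_inf (le_inf inf_le_left ?_) (le_inf ?_ ?_) <;> refine inf_le_right.trans ?_
  · exact le_add_of_nonneg_right hb
  · exact le_add_of_nonneg_left ha
  · exact le_add_of_nonneg_left hw

theorem abs_inf_abs_eq_zero_of_abs_le {a b c d : E} (hac : |a| ≤ |c|) (hbd : |b| ≤ |d|)
    (hcd : |c| ⊓ |d| = 0) : |a| ⊓ |b| = 0 :=
  le_antisymm (hcd ▸ inf_le_inf hac hbd) (le_inf (abs_nonneg a) (abs_nonneg b))

end LatticeOrderedGroup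

theorem UnNullSeq.of_abs_le_abs_add_abs {F : Type*} [NormedAddCommGroup F] [Lattice F]
    [IsOrderedAddMonoid F] [HasSolidNorm F] {a b y : ℕ → F} (ha : UnNullSeq a)
    (hb : UnNullSeq b) (hy : ∀ n, |y n| ≤ |a n| + |b n|) : UnNullSeq y := by
  intro w hw
  have hbound : ∀ n, ‖|y n| ⊓ w‖ ≤ ‖|a n| ⊓ w‖ + ‖|b n| ⊓ w‖ := fun n => by
    have hle : |y n| ⊓ w ≤ |a n| ⊓ w + |b n| ⊓ w :=
      (inf_le_inf_right w (hy n)).trans (add_inf_le_inf_add_inf (abs_nonneg _) (abs_nonneg _) hw)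
    refine (norm_le_norm_of_abs_le_abs ?_).trans (norm_add_le _ _)
    rwa [abs_of_nonneg (le_inf (abs_nonneg _) hw),
      abs_of_nonneg (add_nonneg (le_inf (abs_nonneg _) hw) (le_inf (abs_nonneg _) hw))]
  refine squeeze_zero (fun n => norm_nonneg _) hbound ?_
  simpa using (ha w hw).add (hb w hw)

theorem exists_abs_eq_add_of_mem_solTU_add {X E : Type*} [NormedAddCommGroup X]
    [NormedSpace ℝ X] [NormedAddCommGroup E] [Lattice E] [IsOrderedAddMonoid E] [HasSolidNorm E]
    [NormedSpace ℝ E] {T S : X →L[ℝ] E} {y : E} (hy : y ∈ SolTU (T + S)) :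
    ∃ a ∈ SolTU T, ∃ b ∈ SolTU S, |y| = |a| + |b| := by
  obtain ⟨u, hu, hyu⟩ := hy
  obtain ⟨a, b, ha, haT, hb, hbS, hab⟩ :=
    exists_add_eq_of_le_add (abs_nonneg y) (abs_nonneg (T u)) (abs_nonneg (S u))
      (hyu.trans (abs_add_le (T u) (S u)))
  rw [← abs_of_nonneg ha] at hab haT
  rw [← abs_of_nonneg hb] at hab hbS
  exact ⟨a, ⟨u, hu, haT⟩, b, ⟨u, hu, hbS⟩, hab⟩

theorem uLWeaklyCompact_add_general
    {X E : Type*} [NormedAddCommGroup X] [NormedSpace ℝ X]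
    [NormedAddCommGroup E] [Lattice E] [IsOrderedAddMonoid E] [HasSolidNorm E] [NormedSpace ℝ E]
    (T S : X →L[ℝ] E) (hT : ULWeaklyCompact T) (hS : ULWeaklyCompact S) :
    ULWeaklyCompact (T + S) := by
  intro y hy hdisj
  choose a haT b hbS hy_eq using fun n => exists_abs_eq_add_of_mem_solTU_add (hy n)
  have ha_le : ∀ n, |a n| ≤ |y n| := fun n =>
    (hy_eq n).symm ▸ le_add_of_nonneg_right (abs_nonneg _)
  have hb_le : ∀ n, |b n| ≤ |y n| := fun n =>
    (hy_eq n).symm ▸ le_add_of_nonneg_left (abs_nonneg _)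
  have ha_null : UnNullSeq a := hT a haT fun n m hnm =>
    abs_inf_abs_eq_zero_of_abs_le (ha_le n) (ha_le m) (hdisj n m hnm)
  have hb_null : UnNullSeq b := hS b hbS fun n m hnm =>
    abs_inf_abs_eq_zero_of_abs_le (hb_le n) (hb_le m) (hdisj n m hnm)
  exact ha_null.of_abs_le_abs_add_abs hb_null fun n => (hy_eq n).le

/-- the sum of two u-L-weakly compact operators is u-L-weakly
compact. -/
theorem uLWeaklyCompact_add
    {X E : Type*} [NormedAddCommGroup X] [NormedSpace ℝ X] [CompleteSpace X]
    [NormedAddCommGroup E] [Lattice E] [IsOrderedAddMonoid E] [HasSolidNorm E] [NormedSpace ℝ E] [CompleteSpace E]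
    (T S : X →L[ℝ] E) (hT : ULWeaklyCompact T) (hS : ULWeaklyCompact S) :
    ULWeaklyCompact (T + S) :=
  uLWeaklyCompact_add_general T S hT hS
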